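/- arXiv:2108.02865 — 2 statements merged into one kernel-verified Lean document; each statement's English description precedes it below -/
import Mathlib

section
/- A body B is uniform if, and only if, the mechanical response factors through a single constitutive map up to a field of material isomorphisms: B is uniform (any two points of B are materially isomorphic) if and only if there exist a map W̄ : GL(3,ℝ) → V and a map P : B → GL(3,ℝ) such that W Y F = W̄ (F * P Y) for all Y ∈ B and all F ∈ GL(3,ℝ). (Here B is assumed nonempty.) -/
/-- The general linear group `GL(3, ℝ)`. -/
abbrev GL3 := Matrix.GeneralLinearGroup (Fin 3) ℝ

/-!
Uniformity makes every point materially isomorphic to one reference point `X₀`, so the response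
of `X₀` serves as `W̄`. Conversely, if `W Y F = W̄ (F * P Y)` for all `Y`, then `P Y * (P X)⁻¹`
is a material isomorphism from `X` to `Y`.
-/

namespace MaterialResponse

variable {G B V : Type*}

def MateriallyIsomorphic [Mul G] (W : B → G → V) (X Y : B) : Prop :=
  ∃ P : G, ∀ F : G, W X (F * P) = W Y F

theorem exists_factorization_of_materiallyIsomorphic [Mul G] {W : B → G → V} (X₀ : B)
    (h : ∀ Y, MateriallyIsomorphic W X₀ Y) :
    ∃ (Wbar : G → V) (P : B → G), ∀ (Y : B) (F : G), W Y F = Wbar (F * P Y) := by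
  choose P hP using h
  exact ⟨W X₀, P, fun Y F => (hP Y F).symm⟩

theorem materiallyIsomorphic_of_factorization [Group G] {W : B → G → V} {Wbar : G → V}
    {P : B → G} (h : ∀ (Y : B) (F : G), W Y F = Wbar (F * P Y)) (X Y : B) :
    MateriallyIsomorphic W X Y :=
  ⟨P Y * (P X)⁻¹, fun F => by rw [h X, h Y, mul_assoc, inv_mul_cancel_right]⟩

theorem forall_materiallyIsomorphic_iff_exists_factorization [Group G] [Nonempty B]
    (W : B → G → V) :
    (∀ X Y, MateriallyIsomorphic W X Y) ↔
      ∃ (Wbar : G → V) (P : B → G), ∀ (Y : B) (F : G), W Y F = Wbar (F * P Y) := by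
  refine ⟨fun h => ?_, fun ⟨_, _, h⟩ => materiallyIsomorphic_of_factorization h⟩
  obtain ⟨X₀⟩ := ‹Nonempty B›
  exact exists_factorization_of_materiallyIsomorphic X₀ (h X₀)

end MaterialResponse

/-- A (nonempty) body `B` is uniform (any two points are materially isomorphic) if and
only if there exist a map `W̄ : GL(3,ℝ) → V` and a map `P : B → GL(3,ℝ)` such that
`W Y F = W̄ (F * P Y)` for all `Y ∈ B` and all `F ∈ GL(3,ℝ)`. -/
theorem uniform_iff_factorization {B V : Type*} [Nonempty B] (W : B → GL3 → V) :
    (∀ X Y : B, ∃ P : GL3, ∀ F : GL3, W X (F * P) = W Y F) ↔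
      (∃ (Wbar : GL3 → V) (P : B → GL3), ∀ (Y : B) (F : GL3), W Y F = Wbar (F * P Y)) :=
  MaterialResponse.forall_materiallyIsomorphic_iff_exists_factorization W
end

section
/- The material groupoid of a body-time manifold is transitive if, and only if, the body-time manifold presents a uniform remodeling: all pairs of ℝ × B are pairwise materially isomorphic (i.e. for all (t,X), (s,Y) ∈ ℝ × B there is a material isomorphism from (t,X) to (s,Y)) if and only if every particle X presents a remodeling and there exists an instant t₀ whose state is uniform. (Here B is assumed nonempty.) -/
def MateriallyIsomorphic {C G V : Type*} [Mul G] (W : C → G → V) (p q : C) : Prop :=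
  ∃ P : G, ∀ F : G, W p (F * P) = W q F

theorem MateriallyIsomorphic.trans {C G V : Type*} [Semigroup G] {W : C → G → V} {p q r : C}
    (hpq : MateriallyIsomorphic W p q) (hqr : MateriallyIsomorphic W q r) :
    MateriallyIsomorphic W p r := by
  obtain ⟨P, hP⟩ := hpq
  obtain ⟨Q, hQ⟩ := hqr
  exact ⟨Q * P, fun F => by rw [← mul_assoc, hP, hQ]⟩

theorem transitive_iff_uniform_remodeling_general {B V : Type*}
    (W : ℝ × B → GL3 → V) :
    (∀ p q : ℝ × B, ∃ P : GL3, ∀ F : GL3, W p (F * P) = W q F) ↔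
      ((∀ (X : B) (t s : ℝ), ∃ P : GL3, ∀ F : GL3, W (t, X) (F * P) = W (s, X) F) ∧
        ∃ t₀ : ℝ, ∀ X Y : B, ∃ P : GL3, ∀ F : GL3, W (t₀, X) (F * P) = W (t₀, Y) F) := by
  constructor
  · intro htrans
    exact ⟨fun X t s => htrans (t, X) (s, X), 0, fun X Y => htrans (0, X) (0, Y)⟩
  · rintro ⟨hremodeling, t₀, huniform⟩ ⟨t, X⟩ ⟨s, Y⟩
    show MateriallyIsomorphic W (t, X) (s, Y)
    exact .trans (.trans (hremodeling X t t₀) (huniform X Y)) (hremodeling Y t₀ s)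

/-- The material groupoid of a body-time manifold is transitive (any two pairs of
`ℝ × B` are materially isomorphic) if, and only if, every particle presents a
remodeling and there exists an instant whose state is uniform. -/
theorem transitive_iff_uniform_remodeling {B V : Type*} [Nonempty B]
    (W : ℝ × B → GL3 → V) :
    (∀ p q : ℝ × B, ∃ P : GL3, ∀ F : GL3, W p (F * P) = W q F) ↔
      ((∀ (X : B) (t s : ℝ), ∃ P : GL3, ∀ F : GL3, W (t, X) (F * P) = W (s, X) F) ∧
        ∃ t₀ : ℝ, ∀ X Y : B, ∃ P : GL3, ∀ F : GL3, W (t₀, X) (F * P) = W (t₀, Y) F) :=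
  transitive_iff_uniform_remodeling_general W
end
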